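/- Let (Ω, F, μ) be a probability space with filtration (F_n), ω > 0 integrable with ω_n := E(ω | F_n), and m(ω,n) an F_n-measurable median function of ω relative to F_n. If there exists C > 1 with ω_n ≤ C m(ω,n) a.e. for all n, then for all measurable A and all n: E(χ_A | F_n) < 1/4 a.e. implies E(ω χ_A | F_n)/ω_n ≤ 1 − 1/(4C) a.e. -/

import Mathlib

/-!
Put `B = {ω < m(ω,n)}`. Conditionally on `F_n`, the set `A ∪ B` has probability below
`1/4 + 1/2`, so `(A ∪ B)ᶜ` has conditional probability at least `1/4`; on that set
`m(ω,n)⁺ ≤ ω`. Pulling the `F_n`-measurable factor `m(ω,n)⁺` out of the conditional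
expectation gives `E(ω χ_{Aᶜ} | F_n) ≥ m(ω,n)⁺ / 4 ≥ ω_n / (4C)`, which is the claim since
`E(ω χ_A | F_n) = ω_n - E(ω χ_{Aᶜ} | F_n)` and `ω_n > 0`.
-/

open MeasureTheory Set

namespace MeasureTheory

variable {Ω : Type*} {m m0 : MeasurableSpace Ω} {μ : Measure Ω}

lemma condExp_pos_of_ae_pos [IsFiniteMeasure μ] (hm : m ≤ m0) {f : Ω → ℝ}
    (hf : Integrable f μ) (hf_pos : ∀ᵐ x ∂μ, 0 < f x) : ∀ᵐ x ∂μ, 0 < μ[f | m] x := by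
  set B := {x | μ[f | m] x ≤ 0}
  have hB : MeasurableSet[m] B :=
    measurableSet_le stronglyMeasurable_condExp.measurable measurable_const
  have h_int_nonpos : ∫ x in B, f x ∂μ ≤ 0 := by
    rw [← setIntegral_condExp hm hf hB]
    exact setIntegral_nonpos (hm _ hB) fun x hx => hx
  have h_supp : Function.support f =ᵐ[μ] (univ : Set Ω) :=
    ae_eq_univ.mpr (measure_mono_null (fun x hx => by
      simpa [not_lt] using (Function.notMem_support.mp hx).le) (ae_iff.mp hf_pos))
  have hB_null : ¬ 0 < μ (Function.support f ∩ B) := by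
    rw [← setIntegral_pos_iff_support_of_nonneg_ae
      (ae_restrict_of_ae (hf_pos.mono fun x hx => hx.le)) hf.integrableOn]
    exact h_int_nonpos.not_gt
  rw [measure_congr (inter_ae_eq_right_of_ae_eq_univ h_supp), not_lt, nonpos_iff_eq_zero]
    at hB_null
  rw [ae_iff]
  simpa [not_lt] using hB_null

lemma one_sub_condExp_indicator_sub_le [IsFiniteMeasure μ] (hm : m ≤ m0) {A B : Set Ω}
    (hA : MeasurableSet A) (hB : MeasurableSet B) :
    ∀ᵐ x ∂μ, 1 - μ[A.indicator (fun _ => (1 : ℝ)) | m] x - μ[B.indicator (fun _ => (1 : ℝ)) | m] x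
      ≤ μ[(A ∪ B)ᶜ.indicator (fun _ => (1 : ℝ)) | m] x := by
  have hA_int : Integrable (A.indicator fun _ => (1 : ℝ)) μ := (integrable_const 1).indicator hA
  have hB_int : Integrable (B.indicator fun _ => (1 : ℝ)) μ := (integrable_const 1).indicator hB
  have h_le : (fun _ => (1 : ℝ)) - A.indicator (fun _ => 1) - B.indicator (fun _ => 1)
      ≤ (A ∪ B)ᶜ.indicator (fun _ => 1) := by
    intro x
    by_cases hxA : x ∈ A <;> by_cases hxB : x ∈ B <;> simp [hxA, hxB]
  filter_upwards [condExp_mono (m := m) (((integrable_const 1).sub hA_int).sub hB_int)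
      ((integrable_const 1).indicator (hA.union hB).compl) (.of_forall h_le),
    condExp_sub ((integrable_const 1).sub hA_int) hB_int m,
    condExp_sub (integrable_const 1) hA_int m] with x h_mono h_sub h_sub'
  rw [h_sub, Pi.sub_apply, h_sub', Pi.sub_apply, condExp_const hm] at h_mono
  exact h_mono

lemma mul_condExp_le_condExp_of_mul_le (hm : m ≤ m0) {h g f : Ω → ℝ}
    (hh : StronglyMeasurable[m] h) (hg : Integrable g μ) (hf : Integrable f μ)
    (hhg_nonneg : 0 ≤ h * g) (hhg_le : h * g ≤ f) : h * μ[g | m] ≤ᵐ[μ] μ[f | m] := by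
  have hhg_int : Integrable (h * g) μ := by
    refine hf.mono ((hh.mono hm).aestronglyMeasurable.mul hg.aestronglyMeasurable)
      (.of_forall fun x => ?_)
    rw [Real.norm_of_nonneg (hhg_nonneg x)]
    exact (hhg_le x).trans (le_abs_self _)
  filter_upwards [condExp_mul_of_stronglyMeasurable_left hh hhg_int hg,
    condExp_mono (m := m) hhg_int hf (.of_forall hhg_le)] with x h_pull h_mono
  rwa [← h_pull]

lemma condExp_indicator_add_condExp_indicator_compl {f : Ω → ℝ} {A : Set Ω}
    (hA : MeasurableSet A) (hf : Integrable f μ) :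
    μ[A.indicator f | m] + μ[Aᶜ.indicator f | m] =ᵐ[μ] μ[f | m] := by
  have h := condExp_add (m := m) (hf.indicator hA) (hf.indicator hA.compl)
  rw [indicator_self_add_compl] at h
  exact h.symm

end MeasureTheory

open MeasureTheory

theorem stmt16_general {Ω : Type*} {m0 : MeasurableSpace Ω} {μ : Measure Ω} [IsProbabilityMeasure μ]
    (ℱ : Filtration ℕ m0)
    {ω : Ω → ℝ} (hω : Measurable ω) (hpos : ∀ x, 0 < ω x) (hint : Integrable ω μ)
    (m : ℕ → Ω → ℝ)
    (hmeas : ∀ n, StronglyMeasurable[ℱ n] (m n))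
    (hmed2 : ∀ n, ∀ᵐ x ∂μ,
      (μ[Set.indicator {y | ω y < m n y} (fun _ => (1 : ℝ)) | ℱ n]) x ≤ 1 / 2)
    {C : ℝ} (hC : 1 < C)
    (hmed : ∀ n : ℕ, ∀ᵐ x ∂μ, (μ[ω | ℱ n]) x ≤ C * m n x) :
    ∀ A : Set Ω, MeasurableSet A → ∀ n : ℕ,
      (∀ᵐ x ∂μ, (μ[A.indicator (fun _ => (1 : ℝ)) | ℱ n]) x < 1 / 4) →
      (∀ᵐ x ∂μ, (μ[A.indicator ω | ℱ n]) x / (μ[ω | ℱ n]) x ≤ 1 - 1 / (4 * C)) := by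
  intro A hA n hA_small
  have hn := ℱ.le n
  set B := {y | ω y < m n y}
  set G := (A ∪ B)ᶜ
  have hB : MeasurableSet B := measurableSet_lt hω ((hmeas n).mono hn).measurable
  set M : Ω → ℝ := fun x => max (m n x) 0
  have hM : StronglyMeasurable[ℱ n] M :=
    ((hmeas n).measurable.max measurable_const).stronglyMeasurable
  have hMG_nonneg : 0 ≤ M * G.indicator (fun _ => 1) := fun x =>
    mul_nonneg (le_max_right _ _) (indicator_nonneg (fun _ _ => zero_le_one) x)
  have hM_le : M * G.indicator (fun _ => 1) ≤ Aᶜ.indicator ω := by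
    intro x
    by_cases hxG : x ∈ G
    · have hxA : x ∈ Aᶜ := fun h => hxG (Or.inl h)
      have hxB : m n x ≤ ω x := not_lt.mp fun h => hxG (Or.inr h)
      rw [Pi.mul_apply, indicator_of_mem hxG, indicator_of_mem hxA, mul_one]
      exact max_le hxB (hpos x).le
    · rw [Pi.mul_apply, indicator_of_notMem hxG, mul_zero]
      exact indicator_nonneg (fun y _ => (hpos y).le) x
  filter_upwards [condExp_pos_of_ae_pos hn hint (.of_forall hpos),
    one_sub_condExp_indicator_sub_le hn hA hB, hmed2 n, hA_small,
    mul_condExp_le_condExp_of_mul_le hn hM ((integrable_const 1).indicator (hA.union hB).compl)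
      (hint.indicator hA.compl) hMG_nonneg hM_le,
    condExp_indicator_add_condExp_indicator_compl hA hint, hmed n]
    with x hω_pos hG hB_half hA_quarter h_pull h_split h_med
  simp only [Pi.mul_apply, Pi.add_apply] at h_pull h_split
  have hC0 : 0 < C := one_pos.trans hC
  have hG_quarter : 1 / 4 ≤ μ[G.indicator (fun _ => (1 : ℝ)) | ℱ n] x := by linarith
  have h_compl : μ[ω | ℱ n] x / (4 * C) ≤ μ[Aᶜ.indicator ω | ℱ n] x :=
    calc μ[ω | ℱ n] x / (4 * C) ≤ C * M x / (4 * C) := by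
          gcongr; exact h_med.trans (by gcongr; exact le_max_left _ _)
      _ = M x * (1 / 4) := by field_simp
      _ ≤ M x * μ[G.indicator (fun _ => (1 : ℝ)) | ℱ n] x := by gcongr
      _ ≤ μ[Aᶜ.indicator ω | ℱ n] x := h_pull
  rw [div_le_iff₀ hω_pos, sub_mul, one_mul, one_div_mul_eq_div]
  linarith

theorem stmt16 {Ω : Type*} {m0 : MeasurableSpace Ω} {μ : Measure Ω} [IsProbabilityMeasure μ]
    (ℱ : Filtration ℕ m0)
    {ω : Ω → ℝ} (hω : Measurable ω) (hpos : ∀ x, 0 < ω x) (hint : Integrable ω μ)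
    (m : ℕ → Ω → ℝ)
    (hmeas : ∀ n, StronglyMeasurable[ℱ n] (m n))
    (hmed1 : ∀ n, ∀ᵐ x ∂μ,
      (μ[Set.indicator {y | m n y < ω y} (fun _ => (1 : ℝ)) | ℱ n]) x ≤ 1 / 2)
    (hmed2 : ∀ n, ∀ᵐ x ∂μ,
      (μ[Set.indicator {y | ω y < m n y} (fun _ => (1 : ℝ)) | ℱ n]) x ≤ 1 / 2)
    {C : ℝ} (hC : 1 < C)
    (hmed : ∀ n : ℕ, ∀ᵐ x ∂μ, (μ[ω | ℱ n]) x ≤ C * m n x) :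
    ∀ A : Set Ω, MeasurableSet A → ∀ n : ℕ,
      (∀ᵐ x ∂μ, (μ[A.indicator (fun _ => (1 : ℝ)) | ℱ n]) x < 1 / 4) →
      (∀ᵐ x ∂μ, (μ[A.indicator ω | ℱ n]) x / (μ[ω | ℱ n]) x ≤ 1 - 1 / (4 * C)) :=
  stmt16_general ℱ hω hpos hint m hmeas hmed2 hC hmed
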